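/- Let E ∈ M_n(ℝ) be a tropically idempotent matrix of full rank n (equivalently, no column of E is a tropical scaling of another column, and all diagonal entries are 0). If G, H ∈ M_n(ℝ ∪ {-∞}) are tropical monomial matrices (units) with E ⊗ G = E ⊗ H, then G = H. -/
import Mathlib


open Finset Matrix

/-- Tropical (max-plus) matrix multiplication on n × n real matrices. -/
noncomputable def tmul {n : ℕ} [NeZero n] (A B : Matrix (Fin n) (Fin n) ℝ) :
    Matrix (Fin n) (Fin n) ℝ :=
  fun i j => univ.sup' univ_nonempty (fun k => A i k + B k j)

/-- Tropical (max-plus) matrix multiplication over 𝕋 = ℝ ∪ {-∞} = WithBot ℝ. -/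
noncomputable def tmulT {n : ℕ} (A B : Matrix (Fin n) (Fin n) (WithBot ℝ)) :
    Matrix (Fin n) (Fin n) (WithBot ℝ) :=
  fun i j => univ.sup (fun k => A i k + B k j)

/-- A tropical monomial (unit) matrix: exactly one finite entry in each row and
column, i.e. of the form G_{i,σ(i)} = λ_i and -∞ elsewhere. -/
def IsMonomial {n : ℕ} (G : Matrix (Fin n) (Fin n) (WithBot ℝ)) : Prop :=
  ∃ (σ : Equiv.Perm (Fin n)) (lam : Fin n → ℝ),
    ∀ i j, G i j = if j = σ i then (lam i : WithBot ℝ) else ⊥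


lemma sup_eq_single {n : ℕ} [NeZero n] (f : Fin n → WithBot ℝ) (k0 : Fin n)
    (h : ∀ k, k ≠ k0 → f k = ⊥) : univ.sup f = f k0 := by
  refine le_antisymm (Finset.sup_le fun k _ => ?_) (Finset.le_sup (mem_univ _))
  rcases eq_or_ne k k0 with rfl | h'
  · exact le_rfl
  · simp [h k h']

lemma tmulT_monomial {n : ℕ} [NeZero n] (E : Matrix (Fin n) (Fin n) ℝ)
    (G : Matrix (Fin n) (Fin n) (WithBot ℝ)) (σ : Equiv.Perm (Fin n))
    (lam : Fin n → ℝ)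
    (hGdef : ∀ i j, G i j = if j = σ i then (lam i : WithBot ℝ) else ⊥)
    (i j : Fin n) :
    tmulT (E.map (fun a => (a : WithBot ℝ))) G i j
      = ((E i (σ.symm j) + lam (σ.symm j) : ℝ) : WithBot ℝ) := by
  unfold tmulT
  rw [sup_eq_single _ (σ.symm j)]
  · rw [hGdef]
    simp [Matrix.map_apply, ← WithBot.coe_add]
  · intro k hk
    rw [hGdef]
    have : j ≠ σ k := by
      intro hj
      exact hk (by simp [hj])
    simp [Matrix.map_apply, this]

/-- Let E ∈ M_n(ℝ) be tropically idempotent of full rank n (all diagonal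
entries 0 and no column a tropical scaling of another column). If G, H are
tropical monomial matrices over ℝ ∪ {-∞} with E ⊗ G = E ⊗ H, then G = H. -/
theorem fullrank_idempotent_cancel_units {n : ℕ} [NeZero n]
    (E : Matrix (Fin n) (Fin n) ℝ) (hE : tmul E E = E)
    (hdiag : ∀ i, E i i = 0)
    (hcols : ∀ i j (α : ℝ), i ≠ j → (fun k => E k i) ≠ (fun k => α + E k j))
    (G H : Matrix (Fin n) (Fin n) (WithBot ℝ))
    (hG : IsMonomial G) (hH : IsMonomial H)
    (heq : tmulT (E.map (fun a => (a : WithBot ℝ))) G =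
           tmulT (E.map (fun a => (a : WithBot ℝ))) H) :
    G = H := by
  obtain ⟨σ, lam, hGdef⟩ := hG
  obtain ⟨τ, mu, hHdef⟩ := hH
  have key : ∀ i j, E i (σ.symm j) + lam (σ.symm j) = E i (τ.symm j) + mu (τ.symm j) := by
    intro i j
    have h1 := tmulT_monomial E G σ lam hGdef i j
    have h2 := tmulT_monomial E H τ mu hHdef i j
    rw [heq] at h1
    rw [h2] at h1
    exact_mod_cast h1.symm
  have hperm : ∀ j, σ.symm j = τ.symm j := by
    intro j
    by_contra hne
    refine hcols (σ.symm j) (τ.symm j) (mu (τ.symm j) - lam (σ.symm j)) hne (funext fun k => ?_)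
    have := key k j
    linarith
  have hlam : ∀ j, lam (σ.symm j) = mu (τ.symm j) := by
    intro j
    have := key ⟨0, Nat.pos_of_ne_zero (NeZero.ne n)⟩ j
    rw [hperm j] at this ⊢
    linarith
  funext i j
  rw [hGdef, hHdef]
  have hστ : σ i = τ i := by
    have h := hperm (σ i)
    rw [Equiv.symm_apply_apply] at h
    exact ((Equiv.eq_symm_apply τ).mp h).symm
  have hl : lam i = mu i := by
    have h2 := hlam (σ i)
    rw [Equiv.symm_apply_apply, ← hperm (σ i), Equiv.symm_apply_apply] at h2
    exact h2
  rw [hστ, hl]
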